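/- Fix integers a, m ≥ 1 with gcd(a,m) = 1, a real number z, and ε > 0. Let f(p) = ±1 be independent fair coin flips at primes. Then there exists δ = δ(ε, z, a, m) > 0 and X_0 such that for all x ≥ X_0, P(|∑_{p ≤ x, p ≡ a (mod m)} f(p)/p − z| < ε) > δ. -/

import Mathlib

/-!
Since `∑_{p ≡ a (m)} 1/p` diverges while its terms tend to `0`, a greedy choice of signs `v p = ±1`
makes `∑_{p < K, p ≡ a (m)} v p / p` lie within `ε / 2` of `z`, with `K` as large as we like; take
it so large that `∑_{p ≥ K} 1/p² ≤ ε² / 8`. The event `f p = v p` for all these `p < K` has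
probability at least `2⁻ᴷ`; it is independent of the tail `∑_{K ≤ p ≤ x} f p / p`, which by
Chebyshev's inequality is smaller than `ε / 2` in absolute value with probability at least `1 / 2`.
So `δ = 2⁻⁽ᴷ⁺²⁾` works for every `x ≥ K`.

The divergence of `∑_{p ≡ a (m)} 1/p` comes from the lower bound `(φ m)⁻¹ / (x - 1) - C`, as
`x → 1⁺`, on the L-series of `Λ` restricted to the residue class: the analytic input of Dirichlet's
theorem.
-/

open MeasureTheory ProbabilityTheory

/-- The Rademacher law on `ℝ`: `±1` with probability `1/2` each. -/
noncomputable def rademacherLaw : Measure ℝ :=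
  (2 : ENNReal)⁻¹ • Measure.dirac (1 : ℝ) + (2 : ENNReal)⁻¹ • Measure.dirac (-1 : ℝ)

open Filter Topology Finset

lemma exists_forall_sum_inv_sq_le {η : ℝ} (hη : 0 < η) :
    ∃ k : ℕ, ∀ s : Finset ℕ, (∀ n ∈ s, k < n) → ∑ n ∈ s, ((n : ℝ) ^ 2)⁻¹ ≤ η := by
  obtain ⟨k, hk⟩ := exists_nat_gt (2 / η)
  refine ⟨k, fun s hs ↦ ?_⟩
  calc ∑ n ∈ s, ((n : ℝ) ^ 2)⁻¹ ≤ ∑ n ∈ Ioo k (s.sup id + 1), ((n : ℝ) ^ 2)⁻¹ :=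
        sum_le_sum_of_subset_of_nonneg
          (fun n hn ↦ mem_Ioo.mpr ⟨hs n hn, Nat.lt_succ_of_le (le_sup (f := id) hn)⟩)
          fun _ _ _ ↦ by positivity
    _ ≤ 2 / (k + 1) := sum_Ioo_inv_sq_le k _
    _ ≤ η := by
        rw [div_lt_iff₀ hη] at hk
        rw [div_le_iff₀ (by positivity)]
        nlinarith

lemma exists_ge_abs_sub_lt_of_tendsto_atTop {s : ℕ → ℝ} (hs : Tendsto s atTop atTop) {n₀ : ℕ}
    {w ε : ℝ} (hε : 0 < ε) (hw : s n₀ ≤ w) (hstep : ∀ n ≥ n₀, s (n + 1) - s n < ε) :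
    ∃ n ≥ n₀, |s n - w| < ε := by
  have hex : ∃ n, n₀ ≤ n ∧ w ≤ s n :=
    ((hs.eventually_ge_atTop w).and (eventually_ge_atTop n₀)).exists.imp fun _ h ↦ ⟨h.2, h.1⟩
  obtain ⟨n, ⟨hn₀, hwn⟩, hmin⟩ : ∃ n, (n₀ ≤ n ∧ w ≤ s n) ∧ ∀ k < n, ¬ (n₀ ≤ k ∧ w ≤ s k) :=
    ⟨Nat.find hex, Nat.find_spec hex, fun _ ↦ Nat.find_min hex⟩
  rcases hn₀.eq_or_lt with rfl | hlt
  · exact ⟨n₀, le_rfl, abs_lt.mpr ⟨by linarith, by linarith⟩⟩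
  obtain ⟨k, rfl⟩ := Nat.exists_eq_add_of_lt hlt
  have hsk : s (n₀ + k) < w := by
    by_contra! hle
    exact hmin (n₀ + k) (by omega) ⟨by omega, hle⟩
  exact ⟨n₀ + k + 1, by omega,
    abs_lt.mpr ⟨by linarith, by linarith [hstep (n₀ + k) (by omega)]⟩⟩

lemma exists_signs_abs_sum_mul_sub_lt {g : ℕ → ℝ} (hg0 : ∀ n, 0 ≤ g n) (hdiv : ¬ Summable g)
    (hg : Tendsto g atTop (𝓝 0)) (z : ℝ) {ε : ℝ} (hε : 0 < ε) (n₀ : ℕ) :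
    ∃ K ≥ n₀, ∃ v : ℕ → ℝ, (∀ n, v n = 1 ∨ v n = -1) ∧
      |∑ n ∈ range K, v n * g n - z| < ε := by
  set S : ℕ → ℝ := fun K ↦ ∑ n ∈ range K, g n
  obtain ⟨n₁, hn₁⟩ := eventually_atTop.mp
    ((hg.eventually (gt_mem_nhds hε)).and (eventually_ge_atTop n₀))
  -- sign `+1` below `n₁`, then the constant sign `σ` pointing from `S n₁` towards `z`
  set σ : ℝ := if S n₁ ≤ z then 1 else -1
  have hσ : σ = 1 ∨ σ = -1 := by unfold σ; split_ifs <;> simp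
  have hσabs : σ * |z - S n₁| = z - S n₁ := by
    unfold σ; split_ifs with h
    · rw [one_mul, abs_of_nonneg (by linarith)]
    · rw [abs_of_neg (by linarith)]; ring
  obtain ⟨K, hK, hKw⟩ := exists_ge_abs_sub_lt_of_tendsto_atTop
    ((not_summable_iff_tendsto_nat_atTop_of_nonneg hg0).mp hdiv) hε
    (le_add_of_nonneg_right (abs_nonneg (z - S n₁)))
    fun n hn ↦ by simpa [S, sum_range_succ] using (hn₁ n hn).1
  refine ⟨K, (hn₁ n₁ le_rfl).2.trans hK, fun n ↦ if n < n₁ then 1 else σ,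
    fun n ↦ by dsimp only; split_ifs <;> simp [hσ], ?_⟩
  have hhead : ∑ n ∈ range n₁, (if n < n₁ then 1 else σ) * g n = S n₁ :=
    sum_congr rfl fun n hn ↦ by rw [if_pos (mem_range.mp hn), one_mul]
  have htail : ∑ n ∈ Ico n₁ K, (if n < n₁ then 1 else σ) * g n = σ * (S K - S n₁) := by
    rw [← sum_Ico_eq_sub _ hK, mul_sum]
    exact sum_congr rfl fun n hn ↦ by rw [if_neg (not_lt.mpr (mem_Ico.mp hn).1)]
  have hσ1 : |σ| = 1 := by rcases hσ with h | h <;> simp [h]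
  rw [← sum_range_add_sum_Ico _ hK, hhead, htail,
    show S n₁ + σ * (S K - S n₁) - z = σ * (S K - (S n₁ + |z - S n₁|)) by
      linear_combination hσabs, abs_mul, hσ1, one_mul]
  exact hKw

namespace ArithmeticFunction.vonMangoldt

variable {q : ℕ} {a : ZMod q}

lemma residueClass_div_rpow_le {x : ℝ} (hx : 1 < x) (n : ℕ) :
    residueClass a n / (n : ℝ) ^ x ≤ (if n.Prime then 0 else residueClass a n) / n +
      (x - 1)⁻¹ * if n.Prime ∧ (n : ZMod q) = a then (n : ℝ)⁻¹ else 0 := by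
  rcases n.eq_zero_or_pos with rfl | hn
  · simp
  have hn' : (1 : ℝ) ≤ n := by exact_mod_cast hn
  by_cases hp : n.Prime
  · by_cases ha : (n : ZMod q) = a
    · have hlog := Real.log_le_rpow_div (x := n) n.cast_nonneg (sub_pos.2 hx)
      rw [Real.rpow_sub_one (by positivity)] at hlog
      simp only [hp, ha, residueClass, Set.indicator_of_mem, Set.mem_ofPred_eq,
        vonMangoldt_apply_prime hp, if_true, and_self, zero_div, zero_add]
      rw [div_le_iff₀ (by positivity)]
      calc Real.log n ≤ n ^ x / n / (x - 1) := hlog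
        _ = (x - 1)⁻¹ * (n : ℝ)⁻¹ * n ^ x := by ring
    · simp [hp, ha, residueClass]
  · simp only [hp, if_false, false_and, mul_zero, add_zero]
    exact div_le_div_of_nonneg_left (residueClass_nonneg a n) (by positivity)
      (Real.self_le_rpow_of_one_le hn' hx.le)

theorem not_summable_inv_prime_residueClass [NeZero q] (ha : IsUnit a) :
    ¬ Summable fun n : ℕ ↦ if n.Prime ∧ (n : ZMod q) = a then (n : ℝ)⁻¹ else 0 := by
  set g : ℕ → ℝ := fun n ↦ if n.Prime ∧ (n : ZMod q) = a then (n : ℝ)⁻¹ else 0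
  intro hg
  -- Cut the sum at an `N` beyond which `∑ g ≤ τ / 2`. Then, by `log p / p ^ x ≤ (x - 1)⁻¹ / p`,
  -- the L-series of the residue class is `O(1) + τ / (2 (x - 1))`, against its lower bound
  -- `τ / (x - 1) - C` as `x → 1⁺`.
  set τ : ℝ := (q.totient : ℝ)⁻¹
  have hτ : 0 < τ := inv_pos.mpr (mod_cast q.totient.pos_of_neZero)
  obtain ⟨C, hC⟩ := LSeries_residueClass_lower_bound ha
  obtain ⟨N, hN⟩ : ∃ N, ∑' n, g (n + N) ≤ τ / 2 :=
    ((tendsto_sum_nat_add g).eventually (ge_mem_nhds (half_pos hτ))).exists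
  set h : ℕ → ℝ := fun n ↦ (if n.Prime then 0 else residueClass a n) / n
  have hh : Summable fun n ↦ h (n + N) :=
    (summable_nat_add_iff N).mpr (summable_residueClass_non_primes_div a)
  set D := C + ∑ n ∈ range N, vonMangoldt n + ∑' n, h (n + N)
  have hupper {x : ℝ} (hx : x ∈ Set.Ioc 1 2) : τ / 2 ≤ D * (x - 1) := by
    have hx1 : 0 < x - 1 := sub_pos.2 hx.1
    have hsum : Summable fun n : ℕ ↦ residueClass a n / (n : ℝ) ^ x :=
      LSeries.summable_real_of_abscissaOfAbsConv_lt <|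
        (abscissaOfAbsConv_residueClass_le_one a).trans_lt <| mod_cast hx.1
    have hhead : ∑ n ∈ range N, residueClass a n / (n : ℝ) ^ x ≤ ∑ n ∈ range N, vonMangoldt n := by
      refine sum_le_sum fun n _ ↦ ?_
      rcases n.eq_zero_or_pos with rfl | hn
      · simp
      exact (div_le_self (residueClass_nonneg a n)
        (Real.one_le_rpow (mod_cast hn) (by linarith [hx.1]))).trans (residueClass_le a n)
    have htail : ∑' n, residueClass a (n + N) / ((n + N : ℕ) : ℝ) ^ x ≤
        ∑' n, h (n + N) + (x - 1)⁻¹ * (τ / 2) := by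
      have hg' : Summable fun n ↦ g (n + N) := (summable_nat_add_iff N).mpr hg
      calc _ ≤ ∑' n, (h (n + N) + (x - 1)⁻¹ * g (n + N)) :=
            Summable.tsum_le_tsum (fun n ↦ residueClass_div_rpow_le hx.1 (n + N))
              ((summable_nat_add_iff N).mpr hsum) (hh.add (hg'.mul_left _))
        _ = ∑' n, h (n + N) + (x - 1)⁻¹ * ∑' n, g (n + N) := by
            rw [hh.tsum_add (hg'.mul_left _), tsum_mul_left]
        _ ≤ _ := by gcongr
    have := (hC hx).trans ((hsum.sum_add_tsum_nat_add N).symm.le.trans (add_le_add hhead htail))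
    rw [div_eq_mul_inv] at this
    have hinv : (x - 1)⁻¹ * (x - 1) = 1 := inv_mul_cancel₀ hx1.ne'
    nlinarith
  have hlim : Tendsto (fun x : ℝ ↦ D * (x - 1)) (𝓝[>] 1) (𝓝 0) := by
    have : Tendsto (fun x : ℝ ↦ D * (x - 1)) (𝓝 1) (𝓝 (D * (1 - 1))) :=
      (continuous_const.mul (continuous_id.sub continuous_const)).tendsto 1
    simpa using this.mono_left nhdsWithin_le_nhds
  obtain ⟨x, hlt, hx⟩ :=
    ((hlim.eventually (gt_mem_nhds (half_pos hτ))).and (Ioc_mem_nhdsGT one_lt_two)).exists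
  exact (hupper hx).not_gt hlt

end ArithmeticFunction.vonMangoldt

theorem Nat.not_summable_inv_prime_mod_eq {q a : ℕ} (hq : q ≠ 0) (h : a.Coprime q) :
    ¬ Summable fun n : ℕ ↦ if n.Prime ∧ n % q = a % q then (n : ℝ)⁻¹ else 0 := by
  have : NeZero q := ⟨hq⟩
  simpa only [ZMod.natCast_eq_natCast_iff'] using
    ArithmeticFunction.vonMangoldt.not_summable_inv_prime_residueClass
      ((ZMod.isUnit_iff_coprime a q).mpr h)

lemma rademacherLaw_singleton {c : ℝ} (hc : c = 1 ∨ c = -1) : rademacherLaw {c} = 2⁻¹ := by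
  rcases hc with rfl | rfl <;> norm_num [rademacherLaw]

lemma ae_mem_Icc_rademacherLaw : ∀ᵐ y ∂rademacherLaw, y ∈ Set.Icc (-1 : ℝ) 1 := by
  simp only [rademacherLaw, ae_add_measure_iff]
  exact ⟨Measure.ae_smul_measure (by simp) _, Measure.ae_smul_measure (by simp) _⟩

lemma integral_id_rademacherLaw : ∫ y, y ∂rademacherLaw = 0 := by
  rw [rademacherLaw, integral_add_measure, integral_smul_measure, integral_smul_measure,
    integral_dirac, integral_dirac]
  · norm_num
  all_goals exact (integrable_dirac (by simp)).smul_measure (by simp)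

namespace ProbabilityTheory.iIndepFun

variable {Ω ι : Type*} [MeasurableSpace Ω] {μ : Measure Ω} {X : ι → Ω → ℝ}

lemma measure_forall_eq_of_rademacher (hX : iIndepFun X μ) (hmeas : ∀ i, Measurable (X i))
    (hlaw : ∀ i, μ.map (X i) = rademacherLaw) {S : Finset ι} {v : ι → ℝ}
    (hv : ∀ i ∈ S, v i = 1 ∨ v i = -1) :
    μ {ω | ∀ i ∈ S, X i ω = v i} = 2⁻¹ ^ #S := by
  have hinter : {ω | ∀ i ∈ S, X i ω = v i} = ⋂ i ∈ S, X i ⁻¹' {v i} := by ext; simp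
  rw [hinter, hX.meas_biInter fun i _ ↦ ⟨{v i}, measurableSet_singleton _, rfl⟩, ← prod_const]
  refine prod_congr rfl fun i hi ↦ ?_
  rw [← Measure.map_apply (hmeas i) (measurableSet_singleton _), hlaw i,
    rademacherLaw_singleton (hv i hi)]

lemma one_sub_le_measure_abs_sum_div_lt_of_rademacher [IsProbabilityMeasure μ]
    (hX : iIndepFun X μ) (hmeas : ∀ i, Measurable (X i))
    (hlaw : ∀ i, μ.map (X i) = rademacherLaw) (w : ι → ℝ) (T : Finset ι) {r : ℝ} (hr : 0 < r) :
    1 - ENNReal.ofReal ((∑ i ∈ T, (w i ^ 2)⁻¹) / r ^ 2) ≤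
      μ {ω | |∑ i ∈ T, X i ω / w i| < r} := by
  set Y : ι → Ω → ℝ := fun i ω ↦ X i ω / w i
  have hbound (i : ι) : ∀ᵐ ω ∂μ, X i ω ∈ Set.Icc (-1 : ℝ) 1 :=
    (ae_map_iff (hmeas i).aemeasurable measurableSet_Icc).mp (hlaw i ▸ ae_mem_Icc_rademacherLaw)
  have hL2 (i : ι) : MemLp (Y i) 2 μ := by
    simpa only [Y, div_eq_inv_mul] using (MemLp.of_bound (p := 2) (hmeas i).aestronglyMeasurable 1
      ((hbound i).mono fun ω hω ↦ abs_le.mpr hω)).const_mul (w i)⁻¹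
  have hmean : μ[∑ i ∈ T, Y i] = 0 := by
    simp only [Finset.sum_apply]
    rw [integral_finsetSum _ fun i _ ↦ (hL2 i).integrable one_le_two]
    refine sum_eq_zero fun i _ ↦ ?_
    rw [integral_div, ← integral_map (f := fun y ↦ y) (hmeas i).aemeasurable
      aestronglyMeasurable_id, hlaw i, integral_id_rademacherLaw, zero_div]
  have hvar : variance (∑ i ∈ T, Y i) μ ≤ ∑ i ∈ T, (w i ^ 2)⁻¹ := by
    rw [IndepFun.variance_sum (fun i _ ↦ hL2 i) fun i _ j _ hij ↦
      (hX.indepFun hij).comp (measurable_id.div_const _) (measurable_id.div_const _)]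
    refine sum_le_sum fun i _ ↦ ?_
    calc variance (Y i) μ = (w i)⁻¹ ^ 2 * variance (X i) μ := by
          simp only [Y, div_eq_inv_mul, variance_const_mul]
      _ ≤ (w i)⁻¹ ^ 2 * ((1 - (-1)) / 2) ^ 2 :=
          mul_le_mul_of_nonneg_left (variance_le_sq_of_bounded (hbound i)
            (hmeas i).aemeasurable) (sq_nonneg _)
      _ = (w i ^ 2)⁻¹ := by ring
  have hcheb := meas_ge_le_variance_div_sq (memLp_finsetSum' T fun i _ ↦ hL2 i) hr
  rw [hmean] at hcheb
  have hE : MeasurableSet {ω | |∑ i ∈ T, X i ω / w i| < r} :=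
    measurableSet_lt (by fun_prop) measurable_const
  have hcompl : {ω | |∑ i ∈ T, X i ω / w i| < r}ᶜ = {ω | r ≤ |(∑ i ∈ T, Y i) ω - 0|} := by
    ext; simp [Y]
  rw [← compl_compl {ω | _}, prob_compl_eq_one_sub hE.compl, hcompl]
  exact tsub_le_tsub_left (hcheb.trans (ENNReal.ofReal_le_ofReal
    (div_le_div_of_nonneg_right hvar (sq_nonneg r)))) 1

lemma measure_mul_le_measure_abs_sum_add_sum_sub_lt (hX : iIndepFun X μ)
    (hmeas : ∀ i, Measurable (X i)) {S T : Finset ι} (hST : Disjoint S T) (z r s : ℝ) :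
    μ {ω | |∑ i ∈ S, X i ω - z| < r} * μ {ω | |∑ i ∈ T, X i ω| < s} ≤
      μ {ω | |∑ i ∈ S, X i ω + ∑ i ∈ T, X i ω - z| < r + s} := by
  have hind : IndepFun (fun ω ↦ ∑ i ∈ S, X i ω) (fun ω ↦ ∑ i ∈ T, X i ω) μ := by
    have := (hX.indepFun_finset S T hST hmeas).comp (φ := fun t : S → ℝ ↦ ∑ i, t i)
        (ψ := fun t : T → ℝ ↦ ∑ i, t i) (by fun_prop) (by fun_prop)
    simp only [Function.comp_def] at this
    convert this using 2 with ω ω <;> exact (sum_coe_sort _ _).symm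
  refine (hind.measure_inter_preimage_eq_mul {y | |y - z| < r} {y | |y| < s}
    (measurableSet_lt (by fun_prop) measurable_const)
    (measurableSet_lt (by fun_prop) measurable_const)).symm.le.trans
    (measure_mono fun ω ⟨hSω, hTω⟩ ↦ ?_)
  simp only [Set.mem_preimage, Set.mem_ofPred_eq] at hSω hTω ⊢
  rw [add_sub_right_comm]
  exact (abs_add_le _ _).trans_lt (add_lt_add hSω hTω)

lemma inv_two_pow_le_measure_abs_sum_add_sum_div_sub_lt [IsProbabilityMeasure μ]
    (hX : iIndepFun X μ) (hmeas : ∀ i, Measurable (X i))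
    (hlaw : ∀ i, μ.map (X i) = rademacherLaw) (w : ι → ℝ) {S T : Finset ι} (hST : Disjoint S T)
    {v : ι → ℝ} (hv : ∀ i ∈ S, v i = 1 ∨ v i = -1) {z r : ℝ} (hr : 0 < r)
    (hS : |∑ i ∈ S, v i / w i - z| < r) (hT : ∑ i ∈ T, (w i ^ 2)⁻¹ ≤ r ^ 2 / 2) :
    2⁻¹ ^ (#S + 1) ≤ μ {ω | |∑ i ∈ S, X i ω / w i + ∑ i ∈ T, X i ω / w i - z| < 2 * r} := by
  have hsigns : {ω | ∀ i ∈ S, X i ω = v i} ⊆ {ω | |∑ i ∈ S, X i ω / w i - z| < r} :=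
    fun ω hω ↦ by
      have hsum : ∑ i ∈ S, X i ω / w i = ∑ i ∈ S, v i / w i :=
        sum_congr rfl fun i hi ↦ by rw [hω i hi]
      rwa [Set.mem_ofPred_eq, hsum]
  have htail : ENNReal.ofReal ((∑ i ∈ T, (w i ^ 2)⁻¹) / r ^ 2) ≤ 2⁻¹ := by
    rw [← ENNReal.ofReal_ofNat 2, ← ENNReal.ofReal_inv_of_pos two_pos]
    refine ENNReal.ofReal_le_ofReal ((div_le_iff₀ (by positivity)).mpr ?_)
    linarith
  have hY : iIndepFun (fun i ω ↦ X i ω / w i) μ :=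
    hX.comp (fun i y ↦ y / w i) fun i ↦ measurable_id.div_const (w i)
  calc (2⁻¹ : ENNReal) ^ (#S + 1) = 2⁻¹ ^ #S * (1 - 2⁻¹) := by
        rw [pow_succ, ENNReal.one_sub_inv_two]
    _ ≤ μ {ω | ∀ i ∈ S, X i ω = v i} *
          (1 - ENNReal.ofReal ((∑ i ∈ T, (w i ^ 2)⁻¹) / r ^ 2)) := by
        rw [hX.measure_forall_eq_of_rademacher hmeas hlaw hv]
        gcongr
    _ ≤ μ {ω | |∑ i ∈ S, X i ω / w i - z| < r} * μ {ω | |∑ i ∈ T, X i ω / w i| < r} :=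
        mul_le_mul' (measure_mono hsigns)
          (hX.one_sub_le_measure_abs_sum_div_lt_of_rademacher hmeas hlaw w T hr)
    _ ≤ μ {ω | |∑ i ∈ S, X i ω / w i + ∑ i ∈ T, X i ω / w i - z| < r + r} :=
        hY.measure_mul_le_measure_abs_sum_add_sum_sub_lt (fun i ↦ (hmeas i).div_const (w i)) hST
          z r r
    _ = _ := by rw [two_mul]

end ProbabilityTheory.iIndepFun

lemma inv_two_pow_le_measure_abs_sum_prime_div_sub_lt {Ω : Type*} [MeasurableSpace Ω]
    {μ : Measure Ω} [IsProbabilityMeasure μ] {f : ℕ → Ω → ℝ}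
    (hindep : iIndepFun (fun p : Nat.Primes ↦ f p) μ) (hmeas : ∀ n, Measurable (f n))
    (hlaw : ∀ p : ℕ, p.Prime → μ.map (f p) = rademacherLaw) {S T : Finset ℕ}
    (hSp : ∀ p ∈ S, p.Prime) (hTp : ∀ p ∈ T, p.Prime) (hST : Disjoint S T) {v : ℕ → ℝ}
    (hv : ∀ p ∈ S, v p = 1 ∨ v p = -1) {z r : ℝ} (hr : 0 < r) (hS : |∑ p ∈ S, v p / p - z| < r)
    (hT : ∑ p ∈ T, ((p : ℝ) ^ 2)⁻¹ ≤ r ^ 2 / 2) :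
    2⁻¹ ^ (#S + 1) ≤ μ {ω | |∑ p ∈ S, f p ω / p + ∑ p ∈ T, f p ω / p - z| < 2 * r} := by
  have key := hindep.inv_two_pow_le_measure_abs_sum_add_sum_div_sub_lt
    (X := fun p : {p : ℕ // p.Prime} ↦ f p)
    (fun p ↦ hmeas p) (fun p ↦ hlaw p p.2) (fun p ↦ (p : ℝ)) (v := fun p ↦ v p)
    (S := S.subtype Nat.Prime) (T := T.subtype Nat.Prime)
    (disjoint_left.mpr fun _ hpS hpT ↦ disjoint_left.mp hST (mem_subtype.mp hpS)
      (mem_subtype.mp hpT))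
    (fun p hp ↦ hv p (mem_subtype.mp hp)) hr (by rwa [sum_subtype_of_mem (fun p : ℕ ↦ v p / p) hSp])
    (by rwa [sum_subtype_of_mem (fun p : ℕ ↦ ((p : ℝ) ^ 2)⁻¹) hTp])
  have hsum {s : Finset ℕ} (hs : ∀ p ∈ s, p.Prime) (ω : Ω) :
      ∑ p ∈ s.subtype Nat.Prime, f p ω / p = ∑ p ∈ s, f p ω / p :=
    sum_subtype_of_mem (fun n ↦ f n ω / n) hs
  simpa only [card_subtype, filter_true_of_mem hSp, hsum hSp, hsum hTp] using key

lemma ENNReal.ofReal_half_pow_lt_inv_two_pow {k n : ℕ} (h : k < n) :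
    ENNReal.ofReal ((1 / 2) ^ n) < 2⁻¹ ^ k := by
  calc ENNReal.ofReal ((1 / 2) ^ n) < ENNReal.ofReal ((1 / 2) ^ k) :=
        (ENNReal.ofReal_lt_ofReal_iff (by positivity)).mpr
          (pow_lt_pow_right_of_lt_one₀ (by norm_num) (by norm_num) h)
    _ = 2⁻¹ ^ k := by
        rw [ENNReal.ofReal_pow (by norm_num), one_div, ENNReal.ofReal_inv_of_pos two_pos,
          ENNReal.ofReal_ofNat]

theorem prob_hit_target_general {Ω : Type*} [MeasureSpace Ω]
    [IsProbabilityMeasure (ℙ : Measure Ω)]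
    (f : ℕ → Ω → ℝ) (hmeas : ∀ n, Measurable (f n))
    (hindep : iIndepFun (fun p : Nat.Primes => f p) ℙ)
    (hdist : ∀ p : ℕ, p.Prime → Measure.map (f p) ℙ = rademacherLaw)
    (a m : ℕ) (hm : 1 ≤ m) (hcop : Nat.Coprime a m)
    (z : ℝ) (ε : ℝ) (hε : 0 < ε) :
    ∃ δ : ℝ, 0 < δ ∧ ∃ X₀ : ℝ, ∀ x : ℝ, X₀ ≤ x →
      ENNReal.ofReal δ <
        ℙ {ω | |(∑ p ∈ (Finset.range (⌊x⌋₊ + 1)).filter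
            (fun p => p.Prime ∧ p % m = a % m), f p ω / p) - z| < ε} := by
  set g : ℕ → ℝ := fun n ↦ if n.Prime ∧ n % m = a % m then (n : ℝ)⁻¹ else 0
  have hg0 (n : ℕ) : 0 ≤ g n := by positivity
  have hg : Tendsto g atTop (𝓝 0) :=
    squeeze_zero hg0 (fun n ↦ by dsimp only [g]; split_ifs <;> simp) tendsto_inv_atTop_nhds_zero_nat
  obtain ⟨K₀, hK₀⟩ := exists_forall_sum_inv_sq_le (by positivity : (0 : ℝ) < (ε / 2) ^ 2 / 2)
  obtain ⟨K, hK, v, hv, hvz⟩ := exists_signs_abs_sum_mul_sub_lt hg0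
    (Nat.not_summable_inv_prime_mod_eq (by omega) hcop) hg z (half_pos hε) (K₀ + 1)
  refine ⟨(1 / 2) ^ (K + 2), by positivity, K, fun x hx ↦ ?_⟩
  set A := (range (⌊x⌋₊ + 1)).filter fun p ↦ p.Prime ∧ p % m = a % m
  have hA (p : ℕ) (hp : p ∈ A) : p.Prime := (mem_filter.mp hp).2.1
  have hhead : A.filter (· < K) = (range K).filter fun p ↦ p.Prime ∧ p % m = a % m := by
    have := Nat.le_floor hx
    ext n
    simp only [A, mem_filter, mem_range]
    exact ⟨fun h ↦ ⟨h.2, h.1.2⟩, fun h ↦ ⟨⟨by omega, h.2⟩, h.1⟩⟩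
  have hsigned : ∑ p ∈ A.filter (· < K), v p / p = ∑ n ∈ range K, v n * g n := by
    rw [hhead, sum_filter]
    exact sum_congr rfl fun n _ ↦ by simp only [g, mul_ite, mul_zero, div_eq_mul_inv]
  have key := inv_two_pow_le_measure_abs_sum_prime_div_sub_lt hindep hmeas hdist
    (T := A.filter (¬ · < K)) (fun p hp ↦ hA p (mem_filter.mp hp).1)
    (fun p hp ↦ hA p (mem_filter.mp hp).1) (disjoint_filter_filter_not A A (· < K))
    (fun p _ ↦ hv p) (half_pos hε) (hsigned ▸ hvz)
    (hK₀ _ fun p hp ↦ by have := (mem_filter.mp hp).2; omega)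
  simp only [sum_filter_add_sum_filter_not, two_mul, add_halves] at key
  refine (ENNReal.ofReal_half_pow_lt_inv_two_pow ?_).trans_le key
  have := hhead ▸ (card_filter_le _ _).trans (card_range K).le
  omega

/-- For independent fair random signs `f(p)` at the primes, the partial sum
`∑_{p ≤ x, p ≡ a (mod m)} f(p)/p` lands within `ε` of any target `z` with
probability at least some `δ > 0` independent of `x`, for all large `x`. -/
theorem prob_hit_target {Ω : Type*} [MeasureSpace Ω]
    [IsProbabilityMeasure (ℙ : Measure Ω)]
    (f : ℕ → Ω → ℝ) (hmeas : ∀ n, Measurable (f n))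
    (hindep : iIndepFun (fun p : Nat.Primes => f p) ℙ)
    (hdist : ∀ p : ℕ, p.Prime → Measure.map (f p) ℙ = rademacherLaw)
    (a m : ℕ) (ha : 1 ≤ a) (hm : 1 ≤ m) (hcop : Nat.Coprime a m)
    (z : ℝ) (ε : ℝ) (hε : 0 < ε) :
    ∃ δ : ℝ, 0 < δ ∧ ∃ X₀ : ℝ, ∀ x : ℝ, X₀ ≤ x →
      ENNReal.ofReal δ <
        ℙ {ω | |(∑ p ∈ (Finset.range (⌊x⌋₊ + 1)).filter
            (fun p => p.Prime ∧ p % m = a % m), f p ω / p) - z| < ε} :=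
  prob_hit_target_general f hmeas hindep hdist a m hm hcop z ε hε
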